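/- arXiv:2111.05030 — 5 statements merged into one kernel-verified Lean document; each statement's English description precedes it below -/
import Mathlib

section
/- For every integer r ≥ 1 and every d ∈ ℤ, the natural density μ^(r)(d) := lim_{N→∞} (1/N)·|{n < N : Δ^(r)(n) = d}| exists and equals ℙ({x ∈ X : Δ^(r)(x) = d}); moreover Σ_{d∈ℤ} μ^(r)(d) = 1. -/
open Filter Topology MeasureTheory

noncomputable section

/-- Sum of the base-`b` digits of `n`. -/
def digitSum (b n : ℕ) : ℕ := (Nat.digits b n).sum

/-- `Δ^(r)(n) = s(n+r) - s(n)`, the variation of the base-`b` digit sum when adding `r`. -/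
def delta (b r n : ℕ) : ℤ := (digitSum b (n + r) : ℤ) - (digitSum b n : ℤ)

/-- The value `x_0 + x_1 b + ⋯ + x_k b^k` given by the first `k+1` digits of a `b`-adic
integer `x : ℕ → Fin b`. -/
def valk (b : ℕ) (x : ℕ → Fin b) (k : ℕ) : ℕ :=
  ∑ i ∈ Finset.range (k + 1), (x i : ℕ) * b ^ i

/-- `Δ_k^(r)(x) = s_k(x+r) - s_k(x)`: since carries propagate upwards, the first `k+1`
digits of `x + r` are the base-`b` digits of `(x_0 + x_1 b + ⋯ + x_k b^k + r) % b^(k+1)`. -/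
def deltak (b r k : ℕ) (x : ℕ → Fin b) : ℤ :=
  (digitSum b ((valk b x k + r) % b ^ (k + 1)) : ℤ) - (digitSum b (valk b x k) : ℤ)

/-- `Δ^(r)(x) = lim_k Δ_k^(r)(x)`; the sequence is eventually constant for `ℙ`-a.e. `x`. -/
def deltaX (b r : ℕ) (x : ℕ → Fin b) : ℤ :=
  limUnder atTop fun k => deltak b r k x

open scoped ENNReal

/-! If adding `r` to the `b`-adic integer `x` produces no carry out of the digits `0, …, k`
(the event `G_k = carryFree b r k`), then `Δ^(r)(x)` is already `Δ^(r)` of the integer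
`x_0 + ⋯ + x_k b^k`. The events `G_k` increase with `k` and `ℙ(G_kᶜ) ≤ r / b^(k+1)`. On the
integer side, `Δ^(r)(n) = Δ^(r)(n mod b^(k+1))` under the same no-carry condition, so
`{n : Δ^(r)(n) = d}` lies between two `b^(k+1)`-periodic sets whose densities are
`ℙ({Δ^(r) = d} ∩ G_k)` and `ℙ({Δ^(r) = d} ∪ G_kᶜ)`; both tend to `ℙ(Δ^(r) = d)` as `k → ∞`.
Summing over `d` is countable additivity, `Δ^(r)` being measurable as a pointwise limit of
functions of finitely many digits. -/

section Continuity

variable {α : Type*} [MeasurableSpace α] {μ : Measure α} [IsFiniteMeasure μ] {G : ℕ → Set α}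

theorem tendsto_measureReal_inter_of_monotone (hG : Monotone G) (hnull : μ (⋃ k, G k)ᶜ = 0)
    (A : Set α) : Tendsto (fun k => μ.real (A ∩ G k)) atTop (𝓝 (μ.real A)) := by
  have h := tendsto_measure_iUnion_atTop (μ := μ) fun i j hij =>
    Set.inter_subset_inter_right A (hG hij)
  rw [← Set.inter_iUnion, measure_inter_conull hnull] at h
  exact (ENNReal.tendsto_toReal (measure_ne_top μ A)).comp h

theorem tendsto_measureReal_union_compl_of_monotone (hG : Monotone G)
    (hGm : ∀ k, MeasurableSet (G k)) (hnull : μ (⋃ k, G k)ᶜ = 0) {A : Set α}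
    (hA : NullMeasurableSet A μ) :
    Tendsto (fun k => μ.real (A ∪ (G k)ᶜ)) atTop (𝓝 (μ.real A)) := by
  have h := tendsto_measure_iInter_atTop (μ := μ)
    (fun k => hA.union (hGm k).compl.nullMeasurableSet)
    (fun i j hij => Set.union_subset_union_right A (Set.compl_subset_compl.2 (hG hij)))
    ⟨0, measure_ne_top μ _⟩
  have hA' : μ (A ∪ (⋃ k, G k)ᶜ) = μ A :=
    le_antisymm ((measure_union_le _ _).trans (by rw [hnull, add_zero]))
      (measure_mono Set.subset_union_left)
  rw [← Set.union_iInter, ← Set.compl_iUnion, hA'] at h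
  exact (ENNReal.tendsto_toReal (measure_ne_top μ A)).comp h

end Continuity

theorem Nat.count_comp_mod (Q : ℕ → Prop) [DecidablePred Q] {m : ℕ} (hm : 0 < m) (N : ℕ) :
    Nat.count (fun n => Q (n % m)) N = N / m * Nat.count Q m + Nat.count Q (N % m) := by
  have hshort : ∀ s ≤ m, Nat.count (fun n => Q (n % m)) s = Nat.count Q s := fun s hs => by
    simp only [Nat.count_eq_card_filter_range]
    exact congrArg Finset.card (Finset.filter_congr fun n hn => by
      rw [Nat.mod_eq_of_lt (by simp at hn; omega)])
  have hblocks : ∀ q s, Nat.count (fun n => Q (n % m)) (m * q + s) =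
      q * Nat.count Q m + Nat.count (fun n => Q (n % m)) s := by
    intro q s
    induction q with
    | zero => simp
    | succ q ih =>
      rw [show m * (q + 1) + s = m + (m * q + s) by ring, Nat.count_add]
      simp only [Nat.add_mod_left]
      rw [ih, hshort m le_rfl]
      ring
  conv_lhs => rw [← Nat.div_add_mod N m]
  rw [hblocks, hshort _ (Nat.mod_lt N hm).le]

theorem Nat.tendsto_count_comp_mod_div (Q : ℕ → Prop) [DecidablePred Q] {m : ℕ} (hm : 0 < m) :
    Tendsto (fun N => (Nat.count (fun n => Q (n % m)) N : ℝ) / N) atTop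
      (𝓝 (Nat.count Q m / m)) := by
  rw [tendsto_iff_norm_sub_tendsto_zero]
  refine squeeze_zero_norm' ?_ (tendsto_const_div_atTop_nhds_zero_nat (m : ℝ))
  filter_upwards [eventually_gt_atTop 0] with N hN
  have hs : N % m < m := Nat.mod_lt N hm
  have hcs : Nat.count Q (N % m) ≤ N % m := Nat.count_le _
  have hcm : Nat.count Q m ≤ m := Nat.count_le _
  have hmR : (0 : ℝ) < m := by exact_mod_cast hm
  have hNR : (0 : ℝ) < N := by exact_mod_cast hN
  have herr : (Nat.count (fun n => Q (n % m)) N : ℝ) / N - Nat.count Q m / m =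
      (Nat.count Q (N % m) - (N % m : ℕ) * Nat.count Q m / m) / N := by
    have hNsplit : (N : ℝ) = m * (N / m : ℕ) + (N % m : ℕ) := by
      exact_mod_cast (Nat.div_add_mod N m).symm
    rw [Nat.count_comp_mod Q hm]
    field_simp
    rw [hNsplit]
    push_cast
    ring
  rw [herr, norm_norm, Real.norm_eq_abs, abs_div, abs_of_pos hNR]
  gcongr
  refine abs_sub_le_of_nonneg_of_le (by positivity) (by exact_mod_cast (hcs.trans hs.le))
    (by positivity) ?_
  rw [div_le_iff₀ hmR]
  exact_mod_cast Nat.mul_le_mul hs.le hcm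

theorem tendsto_of_forall_squeeze {ι κ α : Type*} [TopologicalSpace α] [LinearOrder α]
    [OrderTopology α] {l : Filter ι} {l' : Filter κ} [l'.NeBot] {f : ι → α} {g h : κ → ι → α}
    {ℓ u : κ → α} {a : α} (hg : ∀ k, Tendsto (g k) l (𝓝 (ℓ k)))
    (hh : ∀ k, Tendsto (h k) l (𝓝 (u k))) (hgf : ∀ k, g k ≤ f) (hfh : ∀ k, f ≤ h k)
    (hℓ : Tendsto ℓ l' (𝓝 a)) (hu : Tendsto u l' (𝓝 a)) : Tendsto f l (𝓝 a) := by
  refine tendsto_order.2 ⟨fun c hc => ?_, fun c hc => ?_⟩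
  · obtain ⟨k, hk⟩ := (hℓ.eventually (lt_mem_nhds hc)).exists
    exact ((hg k).eventually (lt_mem_nhds hk)).mono fun N hN => hN.trans_le (hgf k N)
  · obtain ⟨k, hk⟩ := (hu.eventually (gt_mem_nhds hc)).exists
    exact ((hh k).eventually (gt_mem_nhds hk)).mono fun N hN => (hfh k N).trans_lt hN

theorem hasSum_measureReal_preimage_singleton {Ω β : Type*} [MeasurableSpace Ω] [Countable β]
    [MeasurableSpace β] [MeasurableSingletonClass β] {μ : Measure Ω} [IsProbabilityMeasure μ]
    {f : Ω → β} (hf : Measurable f) : HasSum (fun y => μ.real (f ⁻¹' {y})) 1 := by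
  have h : ∑' y, μ (f ⁻¹' {y}) = 1 := by
    rw [← measure_iUnion (fun y z hyz => (Set.disjoint_singleton.2 hyz).preimage f)
      (fun y => hf (measurableSet_singleton y)), ← Set.preimage_iUnion, Set.iUnion_of_singleton,
      Set.preimage_univ, measure_univ]
  have hsum := ENNReal.hasSum_toReal (f := fun y => μ (f ⁻¹' {y})) (h ▸ ENNReal.one_ne_top)
  rwa [← ENNReal.tsum_toReal_eq fun y => measure_ne_top μ _, h, ENNReal.toReal_one] at hsum

theorem Nat.count_le_add_le (m r : ℕ) : Nat.count (fun n => m ≤ n + r) m ≤ r := by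
  calc Nat.count (fun n => m ≤ n + r) m
      ≤ Nat.count (fun n => m ≤ n + r) (m - r + r) := Nat.count_monotone _ (by omega)
    _ = Nat.count (fun n => m ≤ n + r) (m - r) + Nat.count (fun n => m ≤ m - r + n + r) r :=
        Nat.count_add _ _ _
    _ ≤ r := by
        rw [Nat.count_iff_forall_not.2 fun n hn => by omega, zero_add]
        exact Nat.count_le _

theorem digitSum_add_base_pow_mul {b m K : ℕ} (hb : 1 < b) (hm : m < b ^ K) (q : ℕ) :
    digitSum b (m + b ^ K * q) = digitSum b m + digitSum b q := by
  rcases Nat.eq_zero_or_pos q with rfl | hq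
  · simp [digitSum]
  have hlen : (Nat.digits b m).length ≤ K := (Nat.digits_length_le_iff hb m).2 hm
  have happend := Nat.digits_append_zeroes_append_digits
    (k := K - (Nat.digits b m).length) (n := m) hb hq
  rw [Nat.add_sub_cancel' hlen] at happend
  simp [digitSum, ← happend]

theorem delta_eq_delta_mod {b r n K : ℕ} (hb : 1 < b) (h : n % b ^ K + r < b ^ K) :
    delta b r n = delta b r (n % b ^ K) := by
  conv_lhs => rw [← Nat.mod_add_div n (b ^ K)]
  rw [delta, add_right_comm, digitSum_add_base_pow_mul hb h,
    digitSum_add_base_pow_mul hb (lt_of_le_of_lt (Nat.le_add_right _ r) h), delta]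
  push_cast; ring

theorem valk_eq_finFunctionFinEquiv (b : ℕ) (x : ℕ → Fin b) (k : ℕ) :
    valk b x k = finFunctionFinEquiv (fun i : Fin (k + 1) => x i) := by
  rw [finFunctionFinEquiv_apply, valk,
    ← Fin.sum_univ_eq_sum_range (fun i => (x i : ℕ) * b ^ i)]

theorem valk_lt (b : ℕ) (x : ℕ → Fin b) (k : ℕ) : valk b x k < b ^ (k + 1) := by
  rw [valk_eq_finFunctionFinEquiv]; exact Fin.isLt _

theorem valk_eq_valk_iff {b : ℕ} {x y : ℕ → Fin b} {k : ℕ} :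
    valk b x k = valk b y k ↔ ∀ i < k + 1, x i = y i := by
  rw [valk_eq_finFunctionFinEquiv, valk_eq_finFunctionFinEquiv, Fin.val_inj,
    finFunctionFinEquiv.apply_eq_iff_eq, funext_iff, Fin.forall_iff]

theorem exists_valk_eq {b n k : ℕ} (hb : 0 < b) (hn : n < b ^ (k + 1)) :
    ∃ x : ℕ → Fin b, valk b x k = n := by
  set f := finFunctionFinEquiv.symm ⟨n, hn⟩
  refine ⟨fun i => if h : i < k + 1 then f ⟨i, h⟩ else ⟨0, hb⟩, ?_⟩
  have hf : (fun i : Fin (k + 1) => if h : (i : ℕ) < k + 1 then f ⟨i, h⟩ else ⟨0, hb⟩) = f :=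
    funext fun i => dif_pos i.isLt
  rw [valk_eq_finFunctionFinEquiv, hf, Equiv.apply_symm_apply]

theorem valk_succ (b : ℕ) (x : ℕ → Fin b) (k : ℕ) :
    valk b x (k + 1) = valk b x k + (x (k + 1) : ℕ) * b ^ (k + 1) :=
  Finset.sum_range_succ _ _

theorem valk_mod_base_pow {b k j : ℕ} (x : ℕ → Fin b) (hkj : k ≤ j) :
    valk b x j % b ^ (k + 1) = valk b x k := by
  induction j, hkj using Nat.le_induction with
  | base => exact Nat.mod_eq_of_lt (valk_lt b x k)
  | succ j hkj ih =>
    rw [valk_succ, ← ih, show b ^ (j + 1) = b ^ (k + 1) * b ^ (j - k) by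
      rw [← pow_add]; congr 1; omega, mul_left_comm, Nat.add_mul_mod_self_left]

theorem measurable_valk (b k : ℕ) : Measurable fun x : ℕ → Fin b => valk b x k := by
  unfold valk
  fun_prop

theorem measurable_deltaX (b r : ℕ) : Measurable (deltaX b r) :=
  (StronglyMeasurable.limUnder fun k => ((measurable_from_nat (f := fun n =>
    (digitSum b ((n + r) % b ^ (k + 1)) : ℤ) - digitSum b n)).comp
      (measurable_valk b k)).stronglyMeasurable).measurable

def carryFree (b r k : ℕ) : Set (ℕ → Fin b) := {x | valk b x k + r < b ^ (k + 1)}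

theorem measurableSet_carryFree (b r k : ℕ) : MeasurableSet (carryFree b r k) :=
  measurable_valk b k (MeasurableSet.of_discrete (s := {n | n + r < b ^ (k + 1)}))

theorem carryFree_mono (b r : ℕ) : Monotone (carryFree b r) := by
  refine monotone_nat_of_le_succ fun k x (hx : valk b x k + r < b ^ (k + 1)) => ?_
  show valk b x (k + 1) + r < b ^ (k + 1 + 1)
  have hd : (x (k + 1) : ℕ) + 1 ≤ b := (x (k + 1)).isLt
  rw [valk_succ, pow_succ _ (k + 1)]
  nlinarith

theorem deltak_eq_of_mem_carryFree {b r k : ℕ} {x : ℕ → Fin b} (hx : x ∈ carryFree b r k) :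
    deltak b r k x = delta b r (valk b x k) := by
  rw [deltak, Nat.mod_eq_of_lt hx, delta]

theorem deltaX_eq_of_mem_carryFree {b r k : ℕ} (hb : 1 < b) {x : ℕ → Fin b}
    (hx : x ∈ carryFree b r k) : deltaX b r x = delta b r (valk b x k) := by
  refine Tendsto.limUnder_eq (tendsto_const_nhds.congr' ?_)
  filter_upwards [eventually_ge_atTop k] with j hkj
  have hmod := valk_mod_base_pow x hkj
  rw [deltak_eq_of_mem_carryFree (carryFree_mono b r hkj hx),
    delta_eq_delta_mod hb (hmod ▸ hx : valk b x j % b ^ (k + 1) + r < b ^ (k + 1)),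
    hmod]

section Cylinders

variable {b : ℕ} {P : Measure (ℕ → Fin b)}
  (hP : ∀ (k : ℕ) (a : ℕ → Fin b), P {x | ∀ i < k, x i = a i} = (1 / (b : ℝ≥0∞)) ^ k)
include hP

theorem isProbabilityMeasure_of_measure_cylinder (hb : 0 < b) : IsProbabilityMeasure P :=
  ⟨by simpa using hP 0 fun _ => ⟨0, hb⟩⟩

theorem measure_valk_eq (hb : 0 < b) {n k : ℕ} (hn : n < b ^ (k + 1)) :
    P {x | valk b x k = n} = ((b : ℝ≥0∞) ^ (k + 1))⁻¹ := by
  obtain ⟨y, rfl⟩ := exists_valk_eq hb hn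
  simp_rw [valk_eq_valk_iff]
  rw [hP, one_div, ENNReal.inv_pow]

theorem measure_valk_mem (hb : 0 < b) (k : ℕ) (Q : ℕ → Prop) [DecidablePred Q] :
    P {x | Q (valk b x k)} = Nat.count Q (b ^ (k + 1)) / (b : ℝ≥0∞) ^ (k + 1) := by
  have hpre : {x | Q (valk b x k)} =
      (fun x => valk b x k) ⁻¹' ↑({n ∈ Finset.range (b ^ (k + 1)) | Q n}) := by
    ext x; simp [valk_lt]
  rw [hpre, ← sum_measure_preimage_singleton _
    (fun n _ => measurable_valk b k (measurableSet_singleton n))]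
  simp only [Set.preimage, Set.mem_singleton_iff]
  rw [Finset.sum_congr rfl fun n hn =>
    measure_valk_eq hP hb (Finset.mem_range.1 (Finset.mem_filter.1 hn).1)]
  simp [Nat.count_eq_card_filter_range, div_eq_mul_inv]

theorem measureReal_valk_mem (hb : 0 < b) (k : ℕ) (Q : ℕ → Prop) [DecidablePred Q] :
    P.real {x | Q (valk b x k)} = Nat.count Q (b ^ (k + 1)) / (b ^ (k + 1) : ℕ) := by
  rw [measureReal_def, measure_valk_mem hP hb, ENNReal.toReal_div]
  simp

theorem measure_compl_carryFree_le (hb : 0 < b) (r k : ℕ) :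
    P (carryFree b r k)ᶜ ≤ r / (b : ℝ≥0∞) ^ (k + 1) := by
  have hc : (carryFree b r k)ᶜ = {x | b ^ (k + 1) ≤ valk b x k + r} := by
    ext x; simp [carryFree]
  rw [hc, measure_valk_mem hP hb k (fun n => b ^ (k + 1) ≤ n + r)]
  gcongr
  exact_mod_cast Nat.count_le_add_le (b ^ (k + 1)) r

theorem measure_compl_iUnion_carryFree (hb : 1 < b) (r : ℕ) :
    P (⋃ k, carryFree b r k)ᶜ = 0 := by
  have hlim : Tendsto (fun k => (r : ℝ≥0∞) / (b : ℝ≥0∞) ^ (k + 1)) atTop (𝓝 0) := by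
    simpa using ENNReal.Tendsto.const_div ((ENNReal.tendsto_pow_atTop_nhds_top_iff.2
      (by exact_mod_cast hb)).comp (tendsto_add_atTop_nat 1))
      (Or.inr (ENNReal.natCast_ne_top r))
  refine le_antisymm (ge_of_tendsto' hlim fun k => ?_) bot_le
  rw [Set.compl_iUnion]
  exact (measure_mono (Set.iInter_subset _ k)).trans
    (measure_compl_carryFree_le hP (by omega) r k)

end Cylinders

section Density

variable {b : ℕ} (hb : 1 < b) (r : ℕ) (d : ℤ)
include hb

theorem setOf_carryFree_and_delta_eq (k : ℕ) :
    {x : ℕ → Fin b | valk b x k + r < b ^ (k + 1) ∧ delta b r (valk b x k) = d} =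
      {x | deltaX b r x = d} ∩ carryFree b r k := by
  ext x
  constructor
  · rintro ⟨hx, hd⟩
    exact ⟨(deltaX_eq_of_mem_carryFree hb hx).trans hd, hx⟩
  · rintro ⟨hd, hx⟩
    exact ⟨hx, (deltaX_eq_of_mem_carryFree hb hx).symm.trans hd⟩

theorem setOf_carryFree_imp_delta_eq (k : ℕ) :
    {x : ℕ → Fin b | valk b x k + r < b ^ (k + 1) → delta b r (valk b x k) = d} =
      {x | deltaX b r x = d} ∪ (carryFree b r k)ᶜ := by
  ext x
  by_cases hx : x ∈ carryFree b r k
  · simp [hx, deltaX_eq_of_mem_carryFree hb hx, show valk b x k + r < b ^ (k + 1) from hx]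
  · simp [hx, show ¬ valk b x k + r < b ^ (k + 1) from hx]

variable {P : Measure (ℕ → Fin b)} [IsFiniteMeasure P]
  (hP : ∀ (k : ℕ) (a : ℕ → Fin b), P {x | ∀ i < k, x i = a i} = (1 / (b : ℝ≥0∞)) ^ k)
include hP

theorem tendsto_count_delta_div :
    Tendsto (fun N => (Nat.count (fun n => delta b r n = d) N : ℝ) / N) atTop
      (𝓝 (P.real {x | deltaX b r x = d})) := by
  have hb0 : 0 < b := by omega
  have hnull := measure_compl_iUnion_carryFree hP hb r
  have hlo := fun k => Nat.tendsto_count_comp_mod_div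
    (fun n => n + r < b ^ (k + 1) ∧ delta b r n = d) (pow_pos hb0 (k + 1))
  have hhi := fun k => Nat.tendsto_count_comp_mod_div
    (fun n => n + r < b ^ (k + 1) → delta b r n = d) (pow_pos hb0 (k + 1))
  refine tendsto_of_forall_squeeze (l' := atTop) hlo hhi (fun k N => ?_) (fun k N => ?_) ?_ ?_
  · refine div_le_div_of_nonneg_right (Nat.cast_le.2 (Nat.count_mono_left fun n _ h => ?_))
      N.cast_nonneg
    exact (delta_eq_delta_mod hb h.1).trans h.2
  · refine div_le_div_of_nonneg_right (Nat.cast_le.2 (Nat.count_mono_left fun n _ h hn => ?_))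
      N.cast_nonneg
    exact (delta_eq_delta_mod hb hn).symm.trans h
  · refine (tendsto_measureReal_inter_of_monotone (carryFree_mono b r) hnull _).congr fun k => ?_
    rw [← setOf_carryFree_and_delta_eq hb, measureReal_valk_mem hP hb0 k
      (fun n => n + r < b ^ (k + 1) ∧ delta b r n = d)]
  · have hA : NullMeasurableSet {x | deltaX b r x = d} P :=
      (measurable_deltaX b r (measurableSet_singleton d)).nullMeasurableSet
    refine (tendsto_measureReal_union_compl_of_monotone (carryFree_mono b r)
      (measurableSet_carryFree b r) hnull hA).congr fun k => ?_
    rw [← setOf_carryFree_imp_delta_eq hb, measureReal_valk_mem hP hb0 k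
      (fun n => n + r < b ^ (k + 1) → delta b r n = d)]

end Density

theorem density_eq_measure_general (b : ℕ) (hb : 2 ≤ b)
    (P : Measure (ℕ → Fin b))
    (hP : ∀ (k : ℕ) (a : ℕ → Fin b),
      P {x | ∀ i < k, x i = a i} = (1 / (b : ENNReal)) ^ k)
    (r : ℕ) :
    (∀ d : ℤ,
      Tendsto (fun N : ℕ =>
          (((Finset.range N).filter fun n => delta b r n = d).card : ℝ) / N)
        atTop (𝓝 ((P {x | deltaX b r x = d}).toReal))) ∧
    HasSum (fun d : ℤ => (P {x | deltaX b r x = d}).toReal) 1 := by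
  have := isProbabilityMeasure_of_measure_cylinder hP (by omega)
  refine ⟨fun d => ?_, hasSum_measureReal_preimage_singleton (measurable_deltaX b r)⟩
  simpa only [Nat.count_eq_card_filter_range, measureReal_def] using
    tendsto_count_delta_div hb r d hP

/-- **Corollary (existence of the densities).** For every `r ≥ 1` and `d ∈ ℤ`, the natural
density `μ^(r)(d) = lim_N (1/N)·|{n < N : Δ^(r)(n) = d}|` exists and equals
`ℙ({x ∈ X : Δ^(r)(x) = d})`; moreover `Σ_{d ∈ ℤ} μ^(r)(d) = 1`. -/
theorem density_eq_measure (b : ℕ) (hb : 2 ≤ b)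
    (P : Measure (ℕ → Fin b))
    (hP : ∀ (k : ℕ) (a : ℕ → Fin b),
      P {x | ∀ i < k, x i = a i} = (1 / (b : ENNReal)) ^ k)
    (r : ℕ) (hr : 1 ≤ r) :
    (∀ d : ℤ,
      Tendsto (fun N : ℕ =>
          (((Finset.range N).filter fun n => delta b r n = d).card : ℝ) / N)
        atTop (𝓝 ((P {x | deltaX b r x = d}).toReal))) ∧
    HasSum (fun d : ℤ => (P {x | deltaX b r x = d}).toReal) 1 :=
  density_eq_measure_general b hb P hP r
end
end

section
/- Let r ≥ 1. For every integer N ≥ 1, every k ∈ ℕ and all d, d' ∈ ℤ, one has (1/N)·|{n < N : Δ^(r)(n) = d and Δ_k^(r)(n) = d'}| ≤ r·b·ℙ({x ∈ X : Δ^(r)(x) = d and Δ_k^(r)(x) = d'}); in particular, (1/N)·|{n < N : Δ^(r)(n) = d}| ≤ r·b·ℙ({x ∈ X : Δ^(r)(x) = d}). -/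
/-!
Let `L` be least with `N + r ≤ b ^ L`, so that `b ^ L ≤ r b N`. For `n < N`, adding `r` to `n`
produces no carry out of the first `L` digits, so `Δ^(r)` and every `Δ_k^(r)` are constant on the
cylinder of `b`-adic integers whose first `L` digits are those of `n`, with the values they take
at `n`. These cylinders have measure `b⁻ᴸ` and are pairwise disjoint, hence
`#{n < N : …} · b⁻ᴸ ≤ ℙ(…)`.
-/

open Filter Topology MeasureTheory

noncomputable section

/-- `Δ_k^(r)` applied to the digit sequence of an integer `n`:
`Δ_k^(r)(n) = s_k(n+r) - s_k(n)` where `s_k` sums the first `k+1` base-`b` digits. -/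
def deltakNat (b r k n : ℕ) : ℤ :=
  (digitSum b ((n + r) % b ^ (k + 1)) : ℤ) - (digitSum b (n % b ^ (k + 1)) : ℤ)

lemma digitSum_add_pow_mul {b L m : ℕ} (hb : 1 < b) (hm : m < b ^ L) (t : ℕ) :
    digitSum b (m + b ^ L * t) = digitSum b m + digitSum b t := by
  rcases Nat.eq_zero_or_pos t with rfl | ht
  · simp [digitSum]
  have hL := Nat.add_sub_cancel' ((Nat.digits_length_le_iff hb m).2 hm)
  have := Nat.digits_append_zeroes_append_digits (n := m) (k := L - (b.digits m).length) hb ht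
  rw [hL] at this
  simp [digitSum, ← this]

/-- For `n < b ^ L`, `prefixVal b x L = n` says that the first `L` digits of `x` are those of `n`:
the fibres of `prefixVal b · L` are the cylinders of length `L`. -/
def prefixVal (b : ℕ) (x : ℕ → Fin b) (L : ℕ) : ℕ :=
  ∑ i ∈ Finset.range L, (x i : ℕ) * b ^ i

namespace prefixVal

variable {b : ℕ}

lemma lt_pow (x : ℕ → Fin b) (L : ℕ) : prefixVal b x L < b ^ L := by
  induction L with
  | zero => simp [prefixVal]
  | succ L ih =>
    rw [prefixVal] at ih
    rw [prefixVal, Finset.sum_range_succ, pow_succ]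
    nlinarith [Nat.mul_le_mul_right (b ^ L) (x L).isLt]

lemma add (x : ℕ → Fin b) (L m : ℕ) :
    prefixVal b x (L + m) = prefixVal b x L + b ^ L * prefixVal b (fun i => x (L + i)) m := by
  simp only [prefixVal, Finset.sum_range_add, Finset.mul_sum, pow_add]
  congr 1
  exact Finset.sum_congr rfl fun i _ => by ring

lemma mod_pow (x : ℕ → Fin b) {L M : ℕ} (h : L ≤ M) :
    prefixVal b x M % b ^ L = prefixVal b x L := by
  obtain ⟨m, rfl⟩ := Nat.exists_eq_add_of_le h
  rw [add, Nat.add_mul_mod_self_left, Nat.mod_eq_of_lt (lt_pow x L)]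

lemma exists_eq {L n : ℕ} (hb : 0 < b) (hn : n < b ^ L) :
    ∃ a : ℕ → Fin b, prefixVal b a L = n := by
  refine ⟨fun i => ⟨n / b ^ i % b, Nat.mod_lt _ hb⟩, ?_⟩
  suffices ∀ L, prefixVal b (fun i => ⟨n / b ^ i % b, Nat.mod_lt _ hb⟩) L = n % b ^ L by
    rw [this, Nat.mod_eq_of_lt hn]
  intro L
  induction L with
  | zero => simp [prefixVal, Nat.mod_one]
  | succ L ih =>
    rw [prefixVal, Finset.sum_range_succ, ← prefixVal, ih, Nat.mod_pow_succ, mul_comm]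

end prefixVal

lemma valk_eq_prefixVal (b : ℕ) (x : ℕ → Fin b) (k : ℕ) :
    valk b x k = prefixVal b x (k + 1) :=
  rfl

lemma deltakNat_eq_delta {b r k n : ℕ} (h : n + r < b ^ (k + 1)) :
    deltakNat b r k n = delta b r n := by
  rw [deltakNat, delta, Nat.mod_eq_of_lt h, Nat.mod_eq_of_lt (by omega)]

section Cylinder

variable {b r L : ℕ} {x : ℕ → Fin b}

lemma deltak_eq_delta (hb : 1 < b) (hx : prefixVal b x L + r < b ^ L) {k : ℕ}
    (hk : L ≤ k + 1) : deltak b r k x = delta b r (prefixVal b x L) := by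
  obtain ⟨m, hm⟩ := Nat.exists_eq_add_of_le hk
  set t := prefixVal b (fun i => x (L + i)) m
  have ht : b ^ L * (t + 1) ≤ b ^ (k + 1) := by
    rw [hm, pow_add]
    exact Nat.mul_le_mul_left _ (prefixVal.lt_pow _ m)
  have hlt : prefixVal b x L + r + b ^ L * t < b ^ (k + 1) := by
    rw [mul_add_one] at ht
    omega
  rw [deltak, valk_eq_prefixVal, hm, prefixVal.add, ← hm, add_right_comm,
    Nat.mod_eq_of_lt hlt, digitSum_add_pow_mul hb hx, digitSum_add_pow_mul hb (by omega), delta]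
  push_cast
  ring

lemma deltak_eq_deltakNat (hb : 1 < b) (hx : prefixVal b x L + r < b ^ L) (k : ℕ) :
    deltak b r k x = deltakNat b r k (prefixVal b x L) := by
  rcases le_total (k + 1) L with hk | hk
  · rw [deltak, deltakNat, valk_eq_prefixVal, ← prefixVal.mod_pow x hk, Nat.mod_add_mod]
  · rw [deltak_eq_delta hb hx hk, deltakNat_eq_delta]
    exact hx.trans_le (Nat.pow_le_pow_right (by omega) hk)

lemma deltaX_eq_delta (hb : 1 < b) (hx : prefixVal b x L + r < b ^ L) :
    deltaX b r x = delta b r (prefixVal b x L) := by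
  refine Tendsto.limUnder_eq (tendsto_const_nhds.congr' ?_)
  filter_upwards [eventually_ge_atTop L] with k hk
  exact (deltak_eq_delta hb hx (by omega)).symm

end Cylinder

lemma Nat.exists_lt_pow_le_mul {b m : ℕ} (hb : 1 < b) (hm : m ≠ 0) :
    ∃ L, m < b ^ L ∧ b ^ L ≤ b * m :=
  ⟨Nat.log b m + 1, Nat.lt_pow_succ_log_self hb m, by
    rw [pow_succ, mul_comm]; exact Nat.mul_le_mul_left _ (Nat.pow_log_le_self b hm)⟩

lemma measurable_prefixVal (b L : ℕ) : Measurable fun x : ℕ → Fin b => prefixVal b x L := by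
  unfold prefixVal
  fun_prop

def IsUniformOnCylinders {b : ℕ} (P : Measure (ℕ → Fin b)) : Prop :=
  ∀ (k : ℕ) (a : ℕ → Fin b), P {x | ∀ i < k, x i = a i} = (1 / (b : ENNReal)) ^ k

namespace IsUniformOnCylinders

variable {b : ℕ} {P : Measure (ℕ → Fin b)}

protected lemma isProbabilityMeasure (hP : IsUniformOnCylinders P) (hb : 0 < b) :
    IsProbabilityMeasure P :=
  ⟨by simpa using hP 0 fun _ => ⟨0, hb⟩⟩

lemma le_measure_prefixVal_eq (hP : IsUniformOnCylinders P) (hb : 0 < b) {L n : ℕ}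
    (hn : n < b ^ L) :
    (1 / (b : ENNReal)) ^ L ≤ P {x | prefixVal b x L = n} := by
  obtain ⟨a, rfl⟩ := prefixVal.exists_eq hb hn
  rw [← hP L a]
  refine measure_mono fun x hx => Finset.sum_congr rfl fun i hi => ?_
  rw [hx i (Finset.mem_range.mp hi)]

lemma card_mul_le_measure (hP : IsUniformOnCylinders P) (hb : 0 < b) {L : ℕ} {S : Finset ℕ}
    (hS : ∀ n ∈ S, n < b ^ L) {E : Set (ℕ → Fin b)}
    (hE : ∀ x, prefixVal b x L ∈ S → x ∈ E) :
    S.card * (1 / (b : ENNReal)) ^ L ≤ P E :=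
  calc S.card * (1 / (b : ENNReal)) ^ L
      = ∑ n ∈ S, (1 / (b : ENNReal)) ^ L := by rw [Finset.sum_const, nsmul_eq_mul]
    _ ≤ ∑ n ∈ S, P ((fun x => prefixVal b x L) ⁻¹' {n}) :=
      Finset.sum_le_sum fun n hn => hP.le_measure_prefixVal_eq hb (hS n hn)
    _ = P ((fun x => prefixVal b x L) ⁻¹' S) :=
      sum_measure_preimage_singleton S fun n _ =>
        measurable_prefixVal b L (measurableSet_singleton n)
    _ ≤ P E := measure_mono hE

lemma card_filter_div_le (hP : IsUniformOnCylinders P) {r : ℕ} (hb : 1 < b) (hr : 1 ≤ r)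
    (N : ℕ) (p : ℕ → Prop) [DecidablePred p] {E : Set (ℕ → Fin b)}
    (hE : ∀ L x, prefixVal b x L + r < b ^ L → p (prefixVal b x L) → x ∈ E) :
    (((Finset.range N).filter p).card : ℝ) / N ≤ r * b * (P E).toReal := by
  rcases N.eq_zero_or_pos with rfl | hN
  · simp only [CharP.cast_eq_zero, div_zero]
    positivity
  have := hP.isProbabilityMeasure (by omega)
  obtain ⟨L, hNL, hLN⟩ := Nat.exists_lt_pow_le_mul hb (m := N + r - 1) (by omega)
  have hS : ∀ n ∈ (Finset.range N).filter p, n + r < b ^ L := fun n hn => by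
    have := Finset.mem_range.mp (Finset.mem_filter.mp hn).1
    omega
  have hcard : (((Finset.range N).filter p).card : ENNReal) * (1 / (b : ENNReal)) ^ L ≤ P E :=
    hP.card_mul_le_measure (by omega) (fun n hn => lt_of_le_of_lt (by omega) (hS n hn))
      fun x hx => hE L x (hS _ hx) (Finset.mem_filter.mp hx).2
  have hcardR := ENNReal.toReal_mono (measure_ne_top P E) hcard
  simp only [ENNReal.toReal_mul, ENNReal.toReal_natCast, ENNReal.toReal_pow, one_div,
    ENNReal.toReal_inv, inv_pow] at hcardR
  rw [mul_inv_le_iff₀ (by positivity)] at hcardR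
  have hpow : (b : ℝ) ^ L ≤ r * b * N := by
    have : N + r - 1 ≤ r * N := Nat.sub_le_iff_le_add.2 (by nlinarith)
    exact_mod_cast hLN.trans (by nlinarith)
  rw [div_le_iff₀ (by positivity)]
  nlinarith [ENNReal.toReal_nonneg (a := P E)]

end IsUniformOnCylinders

theorem density_measure_bound_general (b : ℕ) (hb : 2 ≤ b)
    (P : Measure (ℕ → Fin b))
    (hP : ∀ (k : ℕ) (a : ℕ → Fin b),
      P {x | ∀ i < k, x i = a i} = (1 / (b : ENNReal)) ^ k)
    (r : ℕ) (hr : 1 ≤ r) (N : ℕ) (k : ℕ) (d d' : ℤ) :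
    (((Finset.range N).filter fun n => delta b r n = d ∧ deltakNat b r k n = d').card : ℝ) / N ≤
        (r : ℝ) * b * (P {x | deltaX b r x = d ∧ deltak b r k x = d'}).toReal ∧
    (((Finset.range N).filter fun n => delta b r n = d).card : ℝ) / N ≤
        (r : ℝ) * b * (P {x | deltaX b r x = d}).toReal := by
  have hP : IsUniformOnCylinders P := hP
  exact ⟨hP.card_filter_div_le hb hr N _ fun _ _ hx hn =>
      ⟨(deltaX_eq_delta hb hx).trans hn.1, (deltak_eq_deltakNat hb hx k).trans hn.2⟩,
    hP.card_filter_div_le hb hr N _ fun _ _ hx hn => (deltaX_eq_delta hb hx).trans hn⟩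

/-- **Lemma.** Let `r ≥ 1`. For every `N ≥ 1`, every `k ∈ ℕ` and all `d, d' ∈ ℤ`,
`(1/N)·|{n < N : Δ^(r)(n) = d ∧ Δ_k^(r)(n) = d'}| ≤ r·b·ℙ({x : Δ^(r)(x) = d ∧ Δ_k^(r)(x) = d'})`;
in particular `(1/N)·|{n < N : Δ^(r)(n) = d}| ≤ r·b·ℙ({x : Δ^(r)(x) = d})`. -/
theorem density_measure_bound (b : ℕ) (hb : 2 ≤ b)
    (P : Measure (ℕ → Fin b))
    (hP : ∀ (k : ℕ) (a : ℕ → Fin b),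
      P {x | ∀ i < k, x i = a i} = (1 / (b : ENNReal)) ^ k)
    (r : ℕ) (hr : 1 ≤ r) (N : ℕ) (hN : 1 ≤ N) (k : ℕ) (d d' : ℤ) :
    (((Finset.range N).filter fun n => delta b r n = d ∧ deltakNat b r k n = d').card : ℝ) / N ≤
        (r : ℝ) * b * (P {x | deltaX b r x = d ∧ deltak b r k x = d'}).toReal ∧
    (((Finset.range N).filter fun n => delta b r n = d).card : ℝ) / N ≤
        (r : ℝ) * b * (P {x | deltaX b r x = d}).toReal :=
  density_measure_bound_general b hb P hP r hr N k d d'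
end
end

section
/- For every r̃ ∈ ℕ, every r₀ ∈ {0,…,b−1} and every d ∈ ℤ, μ^(b·r̃+r₀)(d) = ((b−r₀)/b)·μ^(r̃)(d−r₀) + (r₀/b)·μ^(r̃+1)(d+b−r₀). -/
/-! Write `n = b * m + j` with last digit `j < b`. Adding `b * r + r₀` to `n` causes no carry out of
the last digit for the `b - r₀` values `j < b - r₀`, and then `Δ^(b r + r₀)(n) = Δ^(r)(m) + r₀`; for
the other `r₀` values it causes one carry, and then `Δ^(b r + r₀)(n) = Δ^(r + 1)(m) + r₀ - b`.
Hence the number of `n < b * M` with `Δ^(b r + r₀)(n) = d` is an exact combination of the counts for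
`r` and `r + 1` over `m < M`; dividing by `b * M` and letting `M → ∞` gives the relation. -/

open Filter Topology MeasureTheory

noncomputable section

open Finset

theorem Finset.sum_range_mul_eq_sum_sum {M : Type*} [AddCommMonoid M] (f : ℕ → M) (b n : ℕ) :
    ∑ i ∈ range (b * n), f i = ∑ m ∈ range n, ∑ j ∈ range b, f (b * m + j) := by
  induction n with
  | zero => simp
  | succ n ih => rw [Nat.mul_succ, sum_range_add, ih, sum_range_succ]

theorem digitSum_mul_add {b : ℕ} (m : ℕ) {j : ℕ} (hj : j < b) :
    digitSum b (b * m + j) = digitSum b m + j := by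
  rcases (by omega : b = 1 ∨ 1 < b) with rfl | hb
  · simp [show j = 0 by omega]
  by_cases h : j = 0 ∧ m = 0
  · simp [h.1, h.2, digitSum]
  · rw [digitSum, add_comm, Nat.digits_add b hb j m hj (by tauto), List.sum_cons, digitSum,
      add_comm]

theorem delta_mul_add_of_add_lt {b : ℕ} (r m : ℕ) {r0 j : ℕ} (h : j + r0 < b) :
    delta b (b * r + r0) (b * m + j) = delta b r m + r0 := by
  rw [delta, delta, show b * m + j + (b * r + r0) = b * (m + r) + (j + r0) by ring,
    digitSum_mul_add _ h, digitSum_mul_add _ (by omega : j < b)]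
  push_cast
  ring

theorem delta_mul_add_of_le_add {b : ℕ} (r m : ℕ) {r0 j : ℕ} (hj : j < b) (hr0 : r0 < b)
    (h : b ≤ j + r0) :
    delta b (b * r + r0) (b * m + j) = delta b (r + 1) m + r0 - b := by
  rw [delta, delta, show b * m + j + (b * r + r0) = b * (m + (r + 1)) + (j + r0 - b) by
      rw [mul_add b m, mul_add b r, mul_one]; omega,
    digitSum_mul_add _ (by omega : j + r0 - b < b), digitSum_mul_add _ hj]
  push_cast [h]
  ring

def deltaCount (b r : ℕ) (d : ℤ) (N : ℕ) : ℕ := #{n ∈ range N | delta b r n = d}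

theorem deltaCount_mul {b : ℕ} (r : ℕ) {r0 : ℕ} (hr0 : r0 < b) (d : ℤ) (M : ℕ) :
    deltaCount b (b * r + r0) d (b * M) =
      (b - r0) * deltaCount b r (d - r0) M + r0 * deltaCount b (r + 1) (d + b - r0) M := by
  simp only [deltaCount, card_filter, sum_range_mul_eq_sum_sum, mul_sum, ← sum_add_distrib]
  refine sum_congr rfl fun m _ => ?_
  have hfree : ∀ j ∈ range (b - r0), (if delta b (b * r + r0) (b * m + j) = d then 1 else 0) =
      if delta b r m = d - r0 then 1 else 0 := fun j hj => by
    rw [delta_mul_add_of_add_lt r m (by simp at hj; omega)]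
    exact if_congr (by omega) rfl rfl
  have hcarry : ∀ i ∈ range r0,
      (if delta b (b * r + r0) (b * m + (b - r0 + i)) = d then 1 else 0) =
      if delta b (r + 1) m = d + b - r0 then 1 else 0 := fun i hi => by
    rw [delta_mul_add_of_le_add r m (by simp at hi; omega) hr0 (by omega)]
    exact if_congr (by omega) rfl rfl
  rw [show range b = range (b - r0 + r0) by rw [Nat.sub_add_cancel hr0.le], sum_range_add,
    sum_congr rfl hfree, sum_congr rfl hcarry]
  simp

theorem measure_recurrence_general (b : ℕ)
    (μ : ℕ → ℤ → ℝ)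
    (hμ : ∀ (r : ℕ) (d : ℤ),
      Tendsto (fun N : ℕ =>
        (((Finset.range N).filter fun n => delta b r n = d).card : ℝ) / N)
        atTop (𝓝 (μ r d)))
    (rt : ℕ) (r0 : ℕ) (hr0 : r0 < b) (d : ℤ) :
    μ (b * rt + r0) d =
      (((b : ℝ) - r0) / b) * μ rt (d - (r0 : ℤ)) +
        ((r0 : ℝ) / b) * μ (rt + 1) (d + (b : ℤ) - (r0 : ℤ)) := by
  have hblocks : Tendsto (fun M : ℕ => (deltaCount b (b * rt + r0) d (b * M) : ℝ) / (b * M : ℕ))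
      atTop (𝓝 (μ (b * rt + r0) d)) :=
    (hμ _ d).comp (tendsto_id.const_mul_atTop' (by omega))
  have hsplit : Tendsto (fun M : ℕ => ((b - r0 : ℝ) / b) * (deltaCount b rt (d - r0) M / M) +
      (r0 / b : ℝ) * (deltaCount b (rt + 1) (d + b - r0) M / M)) atTop
      (𝓝 (((b - r0 : ℝ) / b) * μ rt (d - r0) + (r0 / b : ℝ) * μ (rt + 1) (d + b - r0))) :=
    ((hμ rt _).const_mul _).add ((hμ (rt + 1) _).const_mul _)
  refine tendsto_nhds_unique hblocks (hsplit.congr' ?_)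
  filter_upwards [eventually_ne_atTop 0] with M hM
  rw [deltaCount_mul rt hr0]
  push_cast [Nat.cast_sub hr0.le]
  field_simp

/-- **Proposition (inductive relation on the measures).** For every `r̃ ∈ ℕ`, every digit
`r₀ ∈ {0,…,b-1}` and every `d ∈ ℤ`,
`μ^(b·r̃+r₀)(d) = ((b-r₀)/b)·μ^(r̃)(d-r₀) + (r₀/b)·μ^(r̃+1)(d+b-r₀)`. -/
theorem measure_recurrence (b : ℕ) (hb : 2 ≤ b)
    (μ : ℕ → ℤ → ℝ)
    (hμ : ∀ (r : ℕ) (d : ℤ),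
      Tendsto (fun N : ℕ =>
        (((Finset.range N).filter fun n => delta b r n = d).card : ℝ) / N)
        atTop (𝓝 (μ r d)))
    (rt : ℕ) (r0 : ℕ) (hr0 : r0 < b) (d : ℤ) :
    μ (b * rt + r0) d =
      (((b : ℝ) - r0) / b) * μ rt (d - (r0 : ℤ)) +
        ((r0 : ℝ) / b) * μ (rt + 1) (d + (b : ℤ) - (r0 : ℤ)) :=
  measure_recurrence_general b μ hμ rt r0 hr0 d
end
end

section
/- For every d ∈ ℤ: if d = 1 − k·(b−1) for some k ∈ ℕ then μ^(1)(d) = 1/b^k − 1/b^{k+1} = (b−1)/b^{k+1}, and otherwise μ^(1)(d) = 0. -/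
/-!
Adding `1` to `n` turns its `v = ν_b(n + 1)` trailing digits `b - 1` into `0` and raises the next
digit by one, so `Δ^(1)(n) = 1 - v (b - 1)`. The `n < N` with `ν_b(n + 1) = k` are those with
`b^k ∣ n + 1` but not `b^(k+1) ∣ n + 1`; there are `⌊N/b^k⌋ - ⌊N/b^(k+1)⌋` of them, which gives
density `1/b^k - 1/b^(k+1)` for `d = 1 - k (b - 1)` and density `0` for every other `d`.
-/

open Filter Topology MeasureTheory

noncomputable section

open Finset

namespace Nat

theorem tendsto_natCast_div_div_self {m : ℕ} (hm : 0 < m) :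
    Tendsto (fun N : ℕ => ((N / m : ℕ) : ℝ) / N) atTop (𝓝 (1 / m)) := by
  have hx : Tendsto (fun N : ℕ => (N : ℝ) / m) atTop atTop :=
    tendsto_natCast_atTop_atTop.atTop_div_const (by positivity)
  refine ((tendsto_nat_floor_div_atTop.comp hx).div_const (m : ℝ)).congr fun N => ?_
  have hm' : (m : ℝ) ≠ 0 := by positivity
  simp only [Function.comp_apply, Nat.floor_div_eq_div]
  rw [div_div_eq_mul_div, div_right_comm, mul_div_cancel_right₀ _ hm']

theorem card_filter_padicValNat_succ_eq {b : ℕ} (hb : b ≠ 1) (k N : ℕ) :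
    #{n ∈ range N | padicValNat b (n + 1) = k} = N / b ^ k - N / b ^ (k + 1) := by
  have hsub : {n ∈ range N | b ^ (k + 1) ∣ n + 1} ⊆ {n ∈ range N | b ^ k ∣ n + 1} :=
    fun n hn => by
      simp only [Finset.mem_filter] at hn ⊢
      exact ⟨hn.1, (pow_dvd_pow b k.le_succ).trans hn.2⟩
  rw [← card_multiples, ← card_multiples, ← card_sdiff_of_subset hsub]
  congr 1
  ext n
  simp only [Finset.mem_filter, Finset.mem_sdiff, Finset.mem_range,
    pow_dvd_iff_le_padicValNat hb n.add_one_ne_zero]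
  omega

end Nat

theorem digitSum_add_mul {b x : ℕ} (hb : 1 < b) (hx : x < b) (y : ℕ) :
    digitSum b (x + b * y) = x + digitSum b y := by
  by_cases h : x = 0 ∧ y = 0
  · simp [h.1, h.2, digitSum]
  · simp [digitSum, Nat.digits_add b hb x y hx (by tauto)]

theorem digitSum_succ_add_mul_padicValNat {b : ℕ} (hb : 1 < b) (n : ℕ) :
    digitSum b (n + 1) + (b - 1) * padicValNat b (n + 1) = digitSum b n + 1 := by
  induction n using Nat.strong_induction_on with
  | _ n ih =>
  obtain ⟨r, q, hr, rfl⟩ : ∃ r q, r < b ∧ n = r + b * q :=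
    ⟨n % b, n / b, Nat.mod_lt _ (by omega), (Nat.mod_add_div n b).symm⟩
  rcases (show r + 1 < b ∨ r + 1 = b by omega) with hlt | rfl
  · have hndvd : ¬ b ∣ r + 1 + b * q := by
      rw [Nat.dvd_add_left (dvd_mul_right b q)]
      exact Nat.not_dvd_of_pos_of_lt r.succ_pos hlt
    rw [add_right_comm, padicValNat.eq_zero_of_not_dvd hndvd, digitSum_add_mul hb hlt,
      digitSum_add_mul hb hr]
    ring
  · have hcarry : r + (r + 1) * q + 1 = (r + 1) * (q + 1) := by ring
    have hq : q < r + (r + 1) * q := by nlinarith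
    have ihq := ih q hq
    have hshift : digitSum (r + 1) ((r + 1) * (q + 1)) = digitSum (r + 1) (q + 1) := by
      simpa using digitSum_add_mul hb (x := 0) (by omega) (q + 1)
    rw [hcarry, hshift, padicValNat_base_mul hb (by omega), digitSum_add_mul hb hr,
      Nat.add_sub_cancel, mul_add]
    rw [Nat.add_sub_cancel] at ihq
    omega

theorem delta_one_eq {b : ℕ} (hb : 1 < b) (n : ℕ) :
    delta b 1 n = 1 - padicValNat b (n + 1) * ((b : ℤ) - 1) := by
  have h := digitSum_succ_add_mul_padicValNat hb n
  generalize padicValNat b (n + 1) = v at h ⊢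
  zify [hb.le] at h
  unfold delta
  linarith

theorem tendsto_card_delta_one_eq {b : ℕ} (hb : 1 < b) (k : ℕ) :
    Tendsto (fun N : ℕ => (#{n ∈ range N | delta b 1 n = 1 - k * ((b : ℤ) - 1)} : ℝ) / N)
      atTop (𝓝 (1 / (b : ℝ) ^ k - 1 / (b : ℝ) ^ (k + 1))) := by
  have hb' : (b : ℤ) - 1 ≠ 0 := by omega
  have hcard (N : ℕ) : #{n ∈ range N | delta b 1 n = 1 - k * ((b : ℤ) - 1)} =
      N / b ^ k - N / b ^ (k + 1) := by
    simp only [delta_one_eq hb, sub_right_inj, mul_left_inj' hb', Nat.cast_inj]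
    exact Nat.card_filter_padicValNat_succ_eq hb.ne' k N
  have hle (N : ℕ) : N / b ^ (k + 1) ≤ N / b ^ k :=
    Nat.div_le_div_left (Nat.pow_le_pow_right (by omega) k.le_succ) (by positivity)
  have hlim := (Nat.tendsto_natCast_div_div_self (m := b ^ k) (by positivity)).sub
    (Nat.tendsto_natCast_div_div_self (m := b ^ (k + 1)) (by positivity))
  push_cast at hlim
  refine hlim.congr fun N => ?_
  rw [hcard, Nat.cast_sub (hle N), sub_div]

/-- **Lemma (the measure `μ^(1)`).** For every `d ∈ ℤ`: if `d = 1 - k(b-1)` for some `k ∈ ℕ`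
then `μ^(1)(d) = 1/b^k - 1/b^(k+1) = (b-1)/b^(k+1)`, and otherwise `μ^(1)(d) = 0`. -/
theorem mu_one (b : ℕ) (hb : 2 ≤ b)
    (μ : ℕ → ℤ → ℝ)
    (hμ : ∀ (r : ℕ) (d : ℤ),
      Tendsto (fun N : ℕ =>
        (((Finset.range N).filter fun n => delta b r n = d).card : ℝ) / N)
        atTop (𝓝 (μ r d)))
    (d : ℤ) :
    (∀ k : ℕ, d = 1 - (k : ℤ) * ((b : ℤ) - 1) →
      μ 1 d = 1 / (b : ℝ) ^ k - 1 / (b : ℝ) ^ (k + 1) ∧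
      μ 1 d = ((b : ℝ) - 1) / (b : ℝ) ^ (k + 1)) ∧
    ((¬ ∃ k : ℕ, d = 1 - (k : ℤ) * ((b : ℤ) - 1)) → μ 1 d = 0) := by
  refine ⟨fun k hd => ?_, fun hd => ?_⟩
  · have hk : μ 1 d = 1 / (b : ℝ) ^ k - 1 / (b : ℝ) ^ (k + 1) :=
      tendsto_nhds_unique (hμ 1 d) (hd ▸ tendsto_card_delta_one_eq hb k)
    refine ⟨hk, hk.trans ?_⟩
    have : (b : ℝ) ≠ 0 := by positivity
    field_simp
    ring
  · have hempty (N : ℕ) : {n ∈ range N | delta b 1 n = d} = ∅ :=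
      filter_false_of_mem fun n _ h => hd ⟨_, h ▸ delta_one_eq hb n⟩
    refine tendsto_nhds_unique (hμ 1 d) ?_
    simp [hempty]
end
end

section
/- For every integer r with 0 ≤ r ≤ b−1, one has Var(μ^(r)) = r·(1+b−r); in particular Var(μ^(0)) = 0 and Var(μ^(1)) = b. -/
/-!
Adding `r < b` to `n` in base `b`, every carry lowers the digit sum by `b - 1`, so by Legendre's
formula `s(n) = n - (b - 1) ∑ᵢ ⌊n / bⁱ⁺¹⌋` one gets `Δ^(r)(n) = r - (b - 1) c(n)`, where `c(n)` is
the number of carries. There are more than `j` carries exactly when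
`n mod b^(j+1) ≥ b^(j+1) - r`, a periodic condition of density `r / b^(j+1)`. Hence `μ^(r)` lives
on the points `r - (b - 1) j`, with masses `1 - r / b` at `j = 0` and `r / bʲ - r / bʲ⁺¹` after,
and its second moment is an explicit combination of the series `∑ jᵏ xʲ`, `k ≤ 2`, at `x = 1 / b`.
-/

open Filter Topology MeasureTheory

noncomputable section

open Finset

namespace Nat

theorem lt_count_iff_of_antitone {p : ℕ → Prop} [DecidablePred p] (hp : Antitone p) {K : ℕ}
    (hK : ¬p K) (j : ℕ) : j < count p K ↔ p j := by
  have hex : ∃ i, ¬p i := ⟨K, hK⟩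
  have hfind : {i ∈ range K | p i} = range (Nat.find hex) := by
    ext i
    simp only [mem_filter, mem_range, Nat.lt_find_iff, not_not]
    refine ⟨fun h m hm => hp hm h.2, fun h => ⟨?_, h i le_rfl⟩⟩
    by_contra! hKi
    exact hK (h K hKi)
  rw [count_eq_card_filter_range, hfind, card_range, Nat.lt_find_iff]
  simp only [not_not]
  exact ⟨fun h => h j le_rfl, fun h m hm => hp hm h⟩

theorem count_eq_of_periodic {p : ℕ → Prop} [DecidablePred p] {m : ℕ}
    (hp : Function.Periodic p m) (N : ℕ) : count p N = N / m * count p m + count p (N % m) := by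
  have hshift : ∀ q k, p (m * q + k) ↔ p k := fun q k => by
    rw [add_comm, mul_comm]
    exact_mod_cast (hp.nat_mul q k).to_iff
  have hmul : ∀ q, count p (m * q) = q * count p m := by
    intro q
    induction q with
    | zero => simp
    | succ q ih => simp only [Nat.mul_succ, count_add, ih, hshift, Nat.succ_mul]
  conv_lhs => rw [← Nat.div_add_mod N m]
  simp only [count_add, hmul, hshift]

theorem count_le_mod_add {m r : ℕ} (hr : r ≤ m) : count (fun n => m ≤ n % m + r) m = r := by
  have hIco : {n ∈ range m | m ≤ n % m + r} = Ico (m - r) m := by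
    ext n
    simp only [mem_filter, mem_range, mem_Ico]
    constructor
    · rintro ⟨hn, h⟩
      rw [Nat.mod_eq_of_lt hn] at h
      omega
    · rintro ⟨h, hn⟩
      rw [Nat.mod_eq_of_lt hn]
      omega
  rw [count_eq_card_filter_range, hIco, card_Ico]
  omega

theorem sum_digits_add_sub_one_mul_sum_div_pow {b n K : ℕ} (hb : 1 < b) (hn : n < b ^ K) :
    (b.digits n).sum + (b - 1) * ∑ i ∈ range K, n / b ^ (i + 1) = n := by
  rcases eq_or_ne n 0 with rfl | hn0
  · simp
  have hlog : (log b n).succ ≤ K := log_lt_of_lt_pow hn0 hn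
  have hsub : ∑ i ∈ range K, n / b ^ (i + 1) = ∑ i ∈ range (log b n).succ, n / b ^ (i + 1) := by
    refine (sum_subset (range_subset_range.2 hlog) fun i hiK hi => ?_).symm
    simp only [mem_range, not_lt] at hi
    exact Nat.div_eq_of_lt ((lt_pow_succ_log_self hb n).trans_le
      (Nat.pow_le_pow_right (by omega) (by omega)))
  rw [hsub, sub_one_mul_sum_log_div_pow_eq_sub_sum_digits]
  have hle := digit_sum_le b n
  omega

end Nat

theorem tendsto_count_div_of_periodic {p : ℕ → Prop} [DecidablePred p] {m : ℕ} (hm : 0 < m)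
    (hp : Function.Periodic p m) :
    Tendsto (fun N : ℕ => (Nat.count p N : ℝ) / N) atTop (𝓝 (Nat.count p m / m)) := by
  set c := Nat.count p m
  have hbounds : ∀ N : ℕ, 0 < N →
      (c / m : ℝ) - c / N ≤ Nat.count p N / N ∧ (Nat.count p N : ℝ) / N ≤ c / m + m / N := by
    intro N hN
    have hcount : (Nat.count p N : ℝ) = (N / m : ℕ) * c + Nat.count p (N % m) := by
      exact_mod_cast Nat.count_eq_of_periodic hp N
    have hdiv : (N : ℝ) = m * (N / m : ℕ) + (N % m : ℕ) := by
      exact_mod_cast (Nat.div_add_mod N m).symm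
    have hmod : ((N % m : ℕ) : ℝ) < m := by exact_mod_cast Nat.mod_lt N hm
    have hrem : (Nat.count p (N % m) : ℝ) ≤ (N % m : ℕ) := by exact_mod_cast Nat.count_le p
    have hm' : (0 : ℝ) < m := by exact_mod_cast hm
    have hN' : (0 : ℝ) < N := by exact_mod_cast hN
    have hc : (0 : ℝ) ≤ c := c.cast_nonneg
    rw [hcount]
    constructor
    · rw [sub_le_iff_le_add, ← add_div, div_le_div_iff₀ hm' hN', hdiv]
      nlinarith
    · rw [← sub_le_iff_le_add, ← sub_div, div_le_div_iff₀ hN' hm', hdiv]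
      nlinarith
  have hlo : Tendsto (fun N : ℕ => (c / m : ℝ) - c / N) atTop (𝓝 (c / m)) := by
    simpa using tendsto_const_nhds.sub (tendsto_const_div_atTop_nhds_zero_nat (c : ℝ))
  have hhi : Tendsto (fun N : ℕ => (c / m : ℝ) + m / N) atTop (𝓝 (c / m)) := by
    simpa using tendsto_const_nhds.add (tendsto_const_div_atTop_nhds_zero_nat (m : ℝ))
  exact tendsto_of_tendsto_of_tendsto_of_le_of_le' hlo hhi
    ((eventually_gt_atTop 0).mono fun N hN => (hbounds N hN).1)
    ((eventually_gt_atTop 0).mono fun N hN => (hbounds N hN).2)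

theorem tendsto_card_le_mod_add_div {m r : ℕ} (hm : 0 < m) (hr : r ≤ m) :
    Tendsto (fun N : ℕ => (#{n ∈ range N | m ≤ n % m + r} : ℝ) / N) atTop (𝓝 (r / m)) := by
  have hp : Function.Periodic (fun n => m ≤ n % m + r) m := fun n => by simp
  simpa only [Nat.count_le_mod_add hr, Nat.count_eq_card_filter_range] using
    tendsto_count_div_of_periodic hm hp

theorem Finset.card_filter_eq_add_card_filter_lt {α : Type*} (s : Finset α) (f : α → ℕ) (j : ℕ) :
    #{a ∈ s | f a = j} + #{a ∈ s | j < f a} = #{a ∈ s | j ≤ f a} := by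
  classical
  rw [← card_union_of_disjoint (disjoint_filter.2 fun a _ h => h.symm.not_lt), ← filter_or]
  simp only [eq_comm (a := f _), ← le_iff_eq_or_lt]

theorem hasSum_coe_sq_mul_geometric_of_norm_lt_one {𝕜 : Type*} [NormedField 𝕜] {x : 𝕜}
    (hx : ‖x‖ < 1) : HasSum (fun n : ℕ => (n : 𝕜) ^ 2 * x ^ n) (x * (1 + x) / (1 - x) ^ 3) := by
  have hx1 : 1 - x ≠ 0 := sub_ne_zero.2 (ne_of_apply_ne norm (by simpa using hx.ne)).symm
  have h := (((hasSum_choose_mul_geometric_of_norm_lt_one 2 hx).mul_left 2).sub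
    ((hasSum_coe_mul_geometric_of_norm_lt_one hx).mul_left 3)).sub
    ((hasSum_geometric_of_norm_lt_one hx).mul_left 2)
  have hterm : ∀ n : ℕ, 2 * (((n + 2).choose 2 : ℕ) * x ^ n) - 3 * (n * x ^ n) - 2 * x ^ n =
      (n : 𝕜) ^ 2 * x ^ n := fun n => by
    have hchoose : ((n + 2).choose 2 : 𝕜) * 2 = (n + 2) * (n + 1) := by
      have h : (n + 2).choose 2 * 2 = (n + 2) * (n + 1) := by
        simpa using (Nat.add_one_mul_choose_eq (n + 1) 1).symm
      simpa using congrArg (Nat.cast : ℕ → 𝕜) h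
    linear_combination x ^ n * hchoose
  have hsum : 2 * (1 / (1 - x) ^ (2 + 1)) - 3 * (x / (1 - x) ^ 2) - 2 * (1 - x)⁻¹ =
      x * (1 + x) / (1 - x) ^ 3 := by
    field_simp
    ring
  simpa only [hterm, hsum] using h

theorem antitone_pow_le_mod_pow_add {b : ℕ} (hb : 0 < b) (n r : ℕ) :
    Antitone fun j => b ^ j ≤ n % b ^ j + r := by
  refine antitone_nat_of_succ_le fun j h => ?_
  have hdigit : b ^ j * (n / b ^ j % b) + b ^ j ≤ b ^ (j + 1) := by
    rw [pow_succ, ← Nat.mul_succ]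
    exact Nat.mul_le_mul_left _ (Nat.mod_lt _ hb)
  have hsplit : n % b ^ (j + 1) = n % b ^ j + b ^ j * (n / b ^ j % b) := by
    rw [pow_succ, Nat.mod_mul]
  change b ^ (j + 1) ≤ n % b ^ (j + 1) + r at h
  omega

-- There is a carry out of the lowest `i + 1` digits iff `b ^ (i + 1) ≤ n % b ^ (i + 1) + r`,
-- and none out of `n + r` digits or more.
def carries (b r n : ℕ) : ℕ := Nat.count (fun i => b ^ (i + 1) ≤ n % b ^ (i + 1) + r) (n + r)

def carryDensity (b r : ℕ) : ℕ → ℝ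
  | 0 => 1 - r / b
  | j + 1 => r / b ^ (j + 1) - r / b ^ (j + 2)

section Carries

variable {b r : ℕ}

theorem lt_carries_iff (hb : 1 < b) {n : ℕ} (j : ℕ) :
    j < carries b r n ↔ b ^ (j + 1) ≤ n % b ^ (j + 1) + r := by
  refine Nat.lt_count_iff_of_antitone
    (fun i k hik => antitone_pow_le_mod_pow_add (by omega) n r (Nat.succ_le_succ hik)) ?_ j
  show ¬b ^ (n + r + 1) ≤ n % b ^ (n + r + 1) + r
  have hpow : n + r < b ^ (n + r + 1) := (Nat.lt_pow_self hb).trans_le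
    (Nat.pow_le_pow_right (by omega) (Nat.le_add_right _ 1))
  have hmod := Nat.mod_le n (b ^ (n + r + 1))
  omega

theorem delta_eq_sub_mul_carries (hb : 1 < b) (hr : r < b) (n : ℕ) :
    delta b r n = r - (b - 1) * carries b r n := by
  have hcarry : ∑ i ∈ range (n + r), (n + r) / b ^ (i + 1) =
      ∑ i ∈ range (n + r), n / b ^ (i + 1) + carries b r n := by
    rw [carries, Nat.count_eq_card_filter_range, card_filter, ← sum_add_distrib]
    refine sum_congr rfl fun i _ => ?_
    have hri : r < b ^ (i + 1) := hr.trans_le (Nat.le_self_pow (by omega) b)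
    rw [Nat.add_div (by positivity), Nat.div_eq_of_lt hri, Nat.mod_eq_of_lt hri, add_zero]
  have hlt : n + r < b ^ (n + r) := Nat.lt_pow_self hb
  have hsum := Nat.sum_digits_add_sub_one_mul_sum_div_pow hb hlt
  have hsum' := Nat.sum_digits_add_sub_one_mul_sum_div_pow hb (n := n) (K := n + r) (by omega)
  rw [hcarry] at hsum
  simp only [delta, digitSum]
  zify [hb.le] at hsum hsum' ⊢
  linear_combination hsum - hsum'

theorem tendsto_card_lt_carries_div (hb : 1 < b) (hr : r < b) (k : ℕ) :
    Tendsto (fun N : ℕ => (#{n ∈ range N | k < carries b r n} : ℝ) / N) atTop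
      (𝓝 (r / b ^ (k + 1))) := by
  have := tendsto_card_le_mod_add_div (m := b ^ (k + 1)) (by positivity)
    (hr.le.trans (Nat.le_self_pow (by omega) b))
  push_cast at this
  simpa only [lt_carries_iff hb] using this

theorem tendsto_card_carries_eq_div (hb : 1 < b) (hr : r < b) (j : ℕ) :
    Tendsto (fun N : ℕ => (#{n ∈ range N | carries b r n = j} : ℝ) / N) atTop
      (𝓝 (carryDensity b r j)) := by
  have hsplit := fun N => card_filter_eq_add_card_filter_lt (range N) (carries b r) j
  cases j with
  | zero =>
    simp only [Nat.zero_le, filter_true, card_range] at hsplit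
    have hlim := (tendsto_card_lt_carries_div hb hr 0).const_sub 1
    rw [zero_add, pow_one] at hlim
    refine hlim.congr' ?_
    filter_upwards [eventually_gt_atTop 0] with N hN
    have hcount : (#{n ∈ range N | carries b r n = 0} : ℝ) +
        #{n ∈ range N | 0 < carries b r n} = N := by
      exact_mod_cast hsplit N
    field_simp
    linarith
  | succ j =>
    refine ((tendsto_card_lt_carries_div hb hr j).sub
      (tendsto_card_lt_carries_div hb hr (j + 1))).congr fun N => ?_
    have hcount : (#{n ∈ range N | carries b r n = j + 1} : ℝ) +
        #{n ∈ range N | j + 1 < carries b r n} = #{n ∈ range N | j < carries b r n} := by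
      exact_mod_cast hsplit N
    rw [← hcount]
    ring

theorem hasSum_sq_mul_carryDensity (hb : 1 < b) :
    HasSum (fun j : ℕ => ((r : ℝ) - (b - 1) * j) ^ 2 * carryDensity b r j)
      (r * (1 + b - r : ℝ)) := by
  have hb' : (1 : ℝ) < b := by exact_mod_cast hb
  obtain ⟨x, hx_def⟩ : ∃ x : ℝ, x = (b : ℝ)⁻¹ := ⟨_, rfl⟩
  have hx : ‖x‖ < 1 := by
    rw [hx_def, norm_inv, Real.norm_natCast]
    exact inv_lt_one_of_one_lt₀ hb'
  obtain ⟨Q, hQ⟩ : ∃ Q : ℝ, Q = b - 1 := ⟨_, rfl⟩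
  obtain ⟨K, hK⟩ : ∃ K : ℝ, K = r * Q / b ^ 2 := ⟨_, rfl⟩
  obtain ⟨R, hR⟩ : ∃ R : ℝ, R = r - Q := ⟨_, rfl⟩
  have htail := (((hasSum_geometric_of_norm_lt_one hx).mul_left (K * R ^ 2)).add
    ((hasSum_coe_mul_geometric_of_norm_lt_one hx).mul_left (-2 * K * R * Q))).add
    ((hasSum_coe_sq_mul_geometric_of_norm_lt_one hx).mul_left (K * Q ^ 2))
  -- the masses after `j = 0` are `r (b - 1) / b ^ (j + 2)`, so the shifted series is `K (R - Q j)² xʲ`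
  have hterm : ∀ j : ℕ,
      K * R ^ 2 * x ^ j + -2 * K * R * Q * (j * x ^ j) + K * Q ^ 2 * (j ^ 2 * x ^ j) =
      ((r : ℝ) - (b - 1) * (j + 1 : ℕ)) ^ 2 * carryDensity b r (j + 1) := fun j => by
    simp only [carryDensity, hx_def, hK, hR, hQ, inv_pow]
    push_cast
    field_simp
    ring
  have hvalue : K * R ^ 2 * (1 - x)⁻¹ + -2 * K * R * Q * (x / (1 - x) ^ 2) +
      K * Q ^ 2 * (x * (1 + x) / (1 - x) ^ 3) = r * (1 + b - r : ℝ) -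
        ∑ j ∈ range 1, ((r : ℝ) - (b - 1) * j) ^ 2 * carryDensity b r j := by
    have hQ0 : Q ≠ 0 := by rw [hQ]; linarith
    have h1x : 1 - x = Q / b := by rw [hx_def, hQ]; field_simp
    rw [h1x]
    simp only [sum_range_one, carryDensity, hK, hR, hx_def]
    field_simp
    rw [hQ]
    ring
  refine (hasSum_nat_add_iff' 1).mp ?_
  rw [← hvalue]
  simpa only [hterm] using htail

theorem variance_delta_of_lt (hb : 1 < b) (hr : r < b) {μ : ℤ → ℝ}
    (hμ : ∀ d : ℤ, Tendsto (fun N : ℕ => (#{n ∈ range N | delta b r n = d} : ℝ) / N) atTop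
      (𝓝 (μ d)))
    {V : ℝ} (hV : HasSum (fun d : ℤ => (d : ℝ) ^ 2 * μ d) V) : V = r * (1 + b - r) := by
  let D : ℕ → ℤ := fun j => r - (b - 1) * j
  have hD : Function.Injective D := fun i j h => by
    have hb1 : (b : ℤ) - 1 ≠ 0 := by omega
    exact_mod_cast mul_left_cancel₀ hb1 (sub_right_injective h)
  have hdelta : ∀ n j, delta b r n = D j ↔ carries b r n = j := fun n j => by
    rw [delta_eq_sub_mul_carries hb hr]
    exact hD.eq_iff
  have hμD : ∀ j, μ (D j) = carryDensity b r j := fun j =>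
    tendsto_nhds_unique (hμ (D j)) <| by
      simpa only [hdelta] using tendsto_card_carries_eq_div hb hr j
  have hμ0 : ∀ d ∉ Set.range D, μ d = 0 := fun d hd => by
    refine tendsto_nhds_unique (hμ d) ?_
    have hempty : ∀ N, {n ∈ range N | delta b r n = d} = ∅ := fun N =>
      filter_false_of_mem fun n _ h =>
        hd ⟨carries b r n, by rw [← h, delta_eq_sub_mul_carries hb hr]⟩
    simpa only [hempty, card_empty, Nat.cast_zero, zero_div] using tendsto_const_nhds
  have hVD := (hD.hasSum_iff fun d hd => by simp only [hμ0 d hd, mul_zero]).2 hV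
  refine hVD.unique ?_
  convert hasSum_sq_mul_carryDensity (r := r) hb using 2 with j
  simp only [Function.comp_apply, hμD, D]
  push_cast
  ring

end Carries

/-- **Lemma (variance for one-digit `r`).** For every `0 ≤ r ≤ b-1`,
`Var(μ^(r)) = r·(1+b-r)`; in particular `Var(μ^(0)) = 0` and `Var(μ^(1)) = b`. -/
theorem variance_one_digit (b : ℕ) (hb : 2 ≤ b)
    (μ : ℕ → ℤ → ℝ)
    (hμ : ∀ (r : ℕ) (d : ℤ),
      Tendsto (fun N : ℕ =>
        (((Finset.range N).filter fun n => delta b r n = d).card : ℝ) / N)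
        atTop (𝓝 (μ r d)))
    (V : ℕ → ℝ)
    (hV : ∀ r : ℕ, HasSum (fun d : ℤ => (d : ℝ) ^ 2 * μ r d) (V r))
    :
    (∀ r : ℕ, r ≤ b - 1 → V r = (r : ℝ) * (1 + (b : ℝ) - r)) ∧
    V 0 = 0 ∧ V 1 = b := by
  have hvar : ∀ r : ℕ, r ≤ b - 1 → V r = (r : ℝ) * (1 + (b : ℝ) - r) := fun r hr =>
    variance_delta_of_lt (by omega) (by omega) (hμ r) (hV r)
  refine ⟨hvar, ?_, ?_⟩
  · simpa using hvar 0 (by omega)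
  · simpa using hvar 1 (by omega)
end
end
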